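/- Suppose S has real entries and C₋, C₊ are purely imaginary (no assumption on Ω₋, Ω₊ beyond Ω₋ Hermitian and Ω₊ symmetric). Then for every s ∈ ℂ with sI_{2n} − A invertible: (i) if C₋ = C₊ (q-coupling), then G_qp[s] = 0, i.e., the BAE measurement of q_out with respect to p_in is realized; (ii) if C₋ = −C₊ (p-coupling), then G_pq[s] = 0, i.e., the BAE measurement of p_out with respect to q_in is realized. -/
import Mathlib


open Matrix

noncomputable section

namespace LQS

/-- Entrywise real part, as a complex matrix. -/
def matRe {k l : ℕ} (X : Matrix (Fin k) (Fin l) ℂ) : Matrix (Fin k) (Fin l) ℂ :=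
  fun i j => ((X i j).re : ℂ)

/-- Entrywise imaginary part, as a complex matrix. -/
def matIm {k l : ℕ} (X : Matrix (Fin k) (Fin l) ℂ) : Matrix (Fin k) (Fin l) ℂ :=
  fun i j => ((X i j).im : ℂ)

/-- A complex matrix has real entries. -/
def isReal {k l : ℕ} (X : Matrix (Fin k) (Fin l) ℂ) : Prop := ∀ i j, (X i j).im = 0

/-- A complex matrix is purely imaginary (every entry has zero real part). -/
def isPurelyImag {k l : ℕ} (X : Matrix (Fin k) (Fin l) ℂ) : Prop := ∀ i j, (X i j).re = 0

/-- The symplectic matrix J_k = [[0, I],[−I, 0]]. -/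
def Jmat (k : ℕ) : Matrix (Fin k ⊕ Fin k) (Fin k ⊕ Fin k) ℂ :=
  fromBlocks 0 1 (-1) 0

/-- D = [[Re S, −Im S],[Im S, Re S]]. -/
def quadD {m : ℕ} (S : Matrix (Fin m) (Fin m) ℂ) :
    Matrix (Fin m ⊕ Fin m) (Fin m ⊕ Fin m) ℂ :=
  fromBlocks (matRe S) (-(matIm S)) (matIm S) (matRe S)

/-- C = [[Re(C₋+C₊), −Im(C₋−C₊)],[Im(C₋+C₊), Re(C₋−C₊)]]. -/
def quadC {m n : ℕ} (Cm Cp : Matrix (Fin m) (Fin n) ℂ) :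
    Matrix (Fin m ⊕ Fin m) (Fin n ⊕ Fin n) ℂ :=
  fromBlocks (matRe (Cm + Cp)) (-(matIm (Cm - Cp))) (matIm (Cm + Cp)) (matRe (Cm - Cp))

/-- B = −[[Re((C₋−C₊)†), −Im((C₋−C₊)†)],[Im((C₋+C₊)†), Re((C₋+C₊)†)]]·D. -/
def quadB {m n : ℕ} (S : Matrix (Fin m) (Fin m) ℂ) (Cm Cp : Matrix (Fin m) (Fin n) ℂ) :
    Matrix (Fin n ⊕ Fin n) (Fin m ⊕ Fin m) ℂ :=
  -(fromBlocks (matRe (Cm - Cp)ᴴ) (-(matIm (Cm - Cp)ᴴ))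
      (matIm (Cm + Cp)ᴴ) (matRe (Cm + Cp)ᴴ)) * quadD S

/-- JH = [[Im(Ω₋+Ω₊), Re(Ω₋−Ω₊)],[−Re(Ω₋+Ω₊), Im(Ω₋−Ω₊)]]. -/
def quadJH {n : ℕ} (Om Op : Matrix (Fin n) (Fin n) ℂ) :
    Matrix (Fin n ⊕ Fin n) (Fin n ⊕ Fin n) ℂ :=
  fromBlocks (matIm (Om + Op)) (matRe (Om - Op)) (-(matRe (Om + Op))) (matIm (Om - Op))

/-- C♯ = −J_n·Cᵀ·J_m. -/
def quadCsharp {m n : ℕ} (Cm Cp : Matrix (Fin m) (Fin n) ℂ) :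
    Matrix (Fin n ⊕ Fin n) (Fin m ⊕ Fin m) ℂ :=
  -(Jmat n) * (quadC Cm Cp)ᵀ * (Jmat m)

/-- A = JH − (1/2)·C♯·C. -/
def quadA {m n : ℕ} (Cm Cp : Matrix (Fin m) (Fin n) ℂ) (Om Op : Matrix (Fin n) (Fin n) ℂ) :
    Matrix (Fin n ⊕ Fin n) (Fin n ⊕ Fin n) ℂ :=
  quadJH Om Op - (1/2 : ℂ) • (quadCsharp Cm Cp * quadC Cm Cp)

/-- Transfer matrix G[s] = D + C(sI − A)⁻¹B. -/
def transferG {m n : ℕ} (S : Matrix (Fin m) (Fin m) ℂ) (Cm Cp : Matrix (Fin m) (Fin n) ℂ)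
    (Om Op : Matrix (Fin n) (Fin n) ℂ) (s : ℂ) :
    Matrix (Fin m ⊕ Fin m) (Fin m ⊕ Fin m) ℂ :=
  quadD S + quadC Cm Cp *
    (s • (1 : Matrix (Fin n ⊕ Fin n) (Fin n ⊕ Fin n) ℂ) - quadA Cm Cp Om Op)⁻¹ *
    quadB S Cm Cp

end LQS

open LQS Matrix

/-- With real S and purely imaginary C₋, C₊ (no assumption on Ω beyond structure):
(i) C₋ = C₊ gives G_qp[s] = 0; (ii) C₋ = −C₊ gives G_pq[s] = 0. -/
theorem stmt_7 {m n : ℕ} (hm : 1 ≤ m) (hn : 1 ≤ n)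
    (S : Matrix (Fin m) (Fin m) ℂ) (Cm Cp : Matrix (Fin m) (Fin n) ℂ)
    (Om Op : Matrix (Fin n) (Fin n) ℂ)
    (hS : S ∈ Matrix.unitaryGroup (Fin m) ℂ)
    (hOmH : Omᴴ = Om) (hOpS : Opᵀ = Op)
    (hSre : isReal S) (hCmim : isPurelyImag Cm) (hCpim : isPurelyImag Cp) :
    ∀ s : ℂ,
      IsUnit (s • (1 : Matrix (Fin n ⊕ Fin n) (Fin n ⊕ Fin n) ℂ) - quadA Cm Cp Om Op) →
      (Cm = Cp → (transferG S Cm Cp Om Op s).toBlocks₁₂ = 0) ∧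
      (Cm = -Cp → (transferG S Cm Cp Om Op s).toBlocks₂₁ = 0) := by
  intro s _
  -- basic facts
  have hReCmCp : matRe (Cm + Cp) = 0 := by
    funext i j; simp [matRe, Complex.add_re, hCmim i j, hCpim i j, Matrix.add_apply]
  have hReCmCp' : matRe (Cm - Cp) = 0 := by
    funext i j; simp [matRe, Complex.sub_re, hCmim i j, hCpim i j, Matrix.sub_apply]
  have hImS : matIm S = 0 := by
    funext i j; simp [matIm, hSre i j]
  have hReH : ∀ (X : Matrix (Fin m) (Fin n) ℂ), matRe X = 0 → matRe Xᴴ = 0 := by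
    intro X hX
    funext i j
    have := congrFun (congrFun hX j) i
    simpa [matRe, Matrix.conjTranspose_apply, Complex.conj_re] using this
  have hD : quadD S = fromBlocks (matRe S) 0 0 (matRe S) := by
    simp [quadD, hImS]
  set M := (s • (1 : Matrix (Fin n ⊕ Fin n) (Fin n ⊕ Fin n) ℂ) - quadA Cm Cp Om Op)⁻¹ with hMdef
  have hMblocks : M = fromBlocks M.toBlocks₁₁ M.toBlocks₁₂ M.toBlocks₂₁ M.toBlocks₂₂ :=
    (fromBlocks_toBlocks M).symm
  constructor
  · intro h
    have hsub : Cm - Cp = 0 := by rw [h]; simp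
    have hIm0 : matIm (Cm - Cp) = 0 := by simp [hsub, matIm]; rfl
    have hIm0' : matIm (Cm - Cp)ᴴ = 0 := by simp [hsub, matIm]; rfl
    have hRe0' : matRe (Cm - Cp)ᴴ = 0 := by simp [hsub, matRe]; rfl
    have hC : quadC Cm Cp = fromBlocks 0 0 (matIm (Cm + Cp)) 0 := by
      simp [quadC, hReCmCp, hReCmCp', hIm0]
    have hB : quadB S Cm Cp =
        fromBlocks 0 0 (-(matIm (Cm + Cp)ᴴ * matRe S)) 0 := by
      rw [quadB, hD, hIm0', hRe0', hReH _ hReCmCp]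
      simp [neg_mul, Matrix.fromBlocks_multiply, Matrix.fromBlocks_neg]
    unfold transferG
    rw [← hMdef, hC, hB, hD, hMblocks, Matrix.fromBlocks_multiply,
      Matrix.fromBlocks_multiply, Matrix.fromBlocks_add]
    simp [Matrix.toBlocks_fromBlocks₁₂]
  · intro h
    have hsub : Cm + Cp = 0 := by rw [h]; simp
    have hIm0 : matIm (Cm + Cp) = 0 := by simp [hsub, matIm]; rfl
    have hIm0' : matIm (Cm + Cp)ᴴ = 0 := by simp [hsub, matIm]; rfl
    have hRe0' : matRe (Cm + Cp)ᴴ = 0 := by simp [hsub, matRe]; rfl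
    have hC : quadC Cm Cp = fromBlocks 0 (-(matIm (Cm - Cp))) 0 0 := by
      simp [quadC, hReCmCp, hReCmCp', hIm0]
    have hB : quadB S Cm Cp =
        fromBlocks 0 (matIm (Cm - Cp)ᴴ * matRe S) 0 0 := by
      rw [quadB, hD, hIm0', hRe0', hReH _ hReCmCp']
      simp [neg_mul, Matrix.fromBlocks_multiply, Matrix.fromBlocks_neg]
    unfold transferG
    rw [← hMdef, hC, hB, hD, hMblocks, Matrix.fromBlocks_multiply,
      Matrix.fromBlocks_multiply, Matrix.fromBlocks_add]
    simp [Matrix.toBlocks_fromBlocks₂₁]
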